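/- arXiv:1303.0802 — 2 statements merged into one kernel-verified Lean document; each statement's English description precedes it below -/
import Mathlib

section
/- An algebra A in a monoidal category C is Frobenius if and only if there exists a self-adjunction (ρ, λ) : A ⊣ A with λ = ϑ ∘ m_A for some morphism ϑ : A → 𝟙 in C. -/
open CategoryTheory CategoryTheory.MonoidalCategory

universe v u

variable {C : Type u} [Category.{v} C] [MonoidalCategory C]

/-- `(ϑ, e)` is a Frobenius pair for the algebra `A`. -/
def Mon_.IsFrobeniusPair (A : Mon C) (ϑ : A.X ⟶ 𝟙_ C) (e : 𝟙_ C ⟶ A.X ⊗ A.X) : Prop :=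
  ((ρ_ A.X).inv ≫ (A.X ◁ e) ≫ (α_ A.X A.X A.X).inv ≫ (A.mon.mul ▷ A.X) =
      (λ_ A.X).inv ≫ (e ▷ A.X) ≫ (α_ A.X A.X A.X).hom ≫ (A.X ◁ A.mon.mul)) ∧
    (e ≫ (ϑ ▷ A.X) ≫ (λ_ A.X).hom = A.mon.one) ∧
    (e ≫ (A.X ◁ ϑ) ≫ (ρ_ A.X).hom = A.mon.one)

/-- `A` is a Frobenius algebra. -/
def Mon_.IsFrobenius (A : Mon C) : Prop :=
  ∃ (ϑ : A.X ⟶ 𝟙_ C) (e : 𝟙_ C ⟶ A.X ⊗ A.X), Mon_.IsFrobeniusPair A ϑ e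

/-- Auxiliary lemma: an insertion `L'` on the right can be pulled out in front of an
insertion of `ρ` on the left. -/
private lemma pull_aux (X : C) (ρ : 𝟙_ C ⟶ X ⊗ X) (w : X ⊗ X ⟶ 𝟙_ C) (L' : X ⟶ X ⊗ X) :
    (λ_ X).inv ≫ (ρ ▷ X) ≫ (α_ X X X).hom ≫
      (X ◁ ((X ◁ L') ≫ (α_ X X X).inv ≫ (w ▷ X) ≫ (λ_ X).hom)) =
    L' ≫ (((λ_ X).inv ≫ (ρ ▷ X) ≫ (α_ X X X).hom ≫ (X ◁ w) ≫ (ρ_ X).hom) ▷ X) := by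
  calc (λ_ X).inv ≫ (ρ ▷ X) ≫ (α_ X X X).hom ≫
      (X ◁ ((X ◁ L') ≫ (α_ X X X).inv ≫ (w ▷ X) ≫ (λ_ X).hom))
      = (λ_ X).inv ≫ (ρ ▷ X) ≫ ((α_ X X X).hom ≫ (X ◁ (X ◁ L'))) ≫
          (X ◁ ((α_ X X X).inv ≫ (w ▷ X) ≫ (λ_ X).hom)) := by
        simp only [MonoidalCategory.whiskerLeft_comp, Category.assoc]
    _ = (λ_ X).inv ≫ ((ρ ▷ X) ≫ ((X ⊗ X) ◁ L')) ≫ (α_ X X (X ⊗ X)).hom ≫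
          (X ◁ ((α_ X X X).inv ≫ (w ▷ X) ≫ (λ_ X).hom)) := by
        rw [← associator_naturality_right]; simp only [Category.assoc]
    _ = ((λ_ X).inv ≫ (𝟙_ C ◁ L')) ≫ (ρ ▷ (X ⊗ X)) ≫ (α_ X X (X ⊗ X)).hom ≫
          (X ◁ ((α_ X X X).inv ≫ (w ▷ X) ≫ (λ_ X).hom)) := by
        rw [← whisker_exchange]; simp only [Category.assoc]
    _ = L' ≫ (λ_ (X ⊗ X)).inv ≫ (ρ ▷ (X ⊗ X)) ≫ (α_ X X (X ⊗ X)).hom ≫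
          (X ◁ ((α_ X X X).inv ≫ (w ▷ X) ≫ (λ_ X).hom)) := by
        rw [← leftUnitor_inv_naturality]; simp only [Category.assoc]
    _ = L' ≫ (((λ_ X).inv ≫ (ρ ▷ X) ≫ (α_ X X X).hom ≫ (X ◁ w) ≫ (ρ_ X).hom) ▷ X) := by
        congr 1
        monoidal

/-- An algebra `A` is Frobenius iff there is a self-adjunction `(ρ, λ) : A ⊣ A` whose
counit has the form `λ = ϑ ∘ m_A` for some `ϑ : A ⟶ 𝟙`. -/
theorem frobenius_iff_selfAdjunction_theta_mul (A : Mon C) :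
    Mon_.IsFrobenius A ↔
      ∃ (ρ : 𝟙_ C ⟶ A.X ⊗ A.X) (ϑ : A.X ⟶ 𝟙_ C),
        ((λ_ A.X).inv ≫ (ρ ▷ A.X) ≫ (α_ A.X A.X A.X).hom ≫ (A.X ◁ (A.mon.mul ≫ ϑ)) ≫
            (ρ_ A.X).hom = 𝟙 A.X) ∧
        ((ρ_ A.X).inv ≫ (A.X ◁ ρ) ≫ (α_ A.X A.X A.X).inv ≫ ((A.mon.mul ≫ ϑ) ▷ A.X) ≫
            (λ_ A.X).hom = 𝟙 A.X) := by
  constructor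
  · rintro ⟨ϑ, e, hFr, h1, h2⟩
    have h1' : e ≫ (ϑ ▷ A.X) = A.mon.one ≫ (λ_ A.X).inv := by rw [← h1]; simp
    have h2' : e ≫ (A.X ◁ ϑ) = A.mon.one ≫ (ρ_ A.X).inv := by rw [← h2]; simp
    refine ⟨e, ϑ, ?_, ?_⟩
    · -- first snake identity
      rw [MonoidalCategory.whiskerLeft_comp]
      slice_lhs 1 4 => rw [← hFr]
      slice_lhs 4 5 => rw [← whisker_exchange]
      slice_lhs 3 4 => rw [← associator_inv_naturality_right]
      slice_lhs 2 3 => rw [← MonoidalCategory.whiskerLeft_comp, h2',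
        MonoidalCategory.whiskerLeft_comp]
      trans (ρ_ A.X).inv ≫ (A.X ◁ A.mon.one) ≫ A.mon.mul
      · monoidal
      · slice_lhs 2 3 => rw [MonObj.mul_one A.X]
        simp
    · -- second snake identity
      rw [MonoidalCategory.comp_whiskerRight]
      slice_lhs 1 4 => rw [hFr]
      slice_lhs 4 5 => rw [whisker_exchange]
      slice_lhs 3 4 => rw [← associator_naturality_left]
      slice_lhs 2 3 => rw [← MonoidalCategory.comp_whiskerRight, h1',
        MonoidalCategory.comp_whiskerRight]
      trans (λ_ A.X).inv ≫ (A.mon.one ▷ A.X) ≫ A.mon.mul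
      · monoidal
      · slice_lhs 2 3 => rw [MonObj.one_mul A.X]
        simp
  · rintro ⟨ρ, ϑ, hS1, hS2⟩
    refine ⟨ϑ, ρ, ?_, ?_, ?_⟩
    · -- the Frobenius compatibility condition
      have hB : A.mon.mul ≫ ((ρ_ A.X).inv ≫ (A.X ◁ ρ) ≫ (α_ A.X A.X A.X).inv ≫
            ((A.mon.mul ≫ ϑ) ▷ A.X) ≫ (λ_ A.X).hom) =
          (A.X ◁ ((ρ_ A.X).inv ≫ (A.X ◁ ρ) ≫ (α_ A.X A.X A.X).inv ≫ (A.mon.mul ▷ A.X))) ≫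
            (α_ A.X A.X A.X).inv ≫ ((A.mon.mul ≫ ϑ) ▷ A.X) ≫ (λ_ A.X).hom := by
        slice_lhs 1 2 => rw [rightUnitor_inv_naturality]
        slice_lhs 2 3 => rw [← whisker_exchange]
        slice_lhs 3 4 => rw [associator_inv_naturality_left]
        slice_lhs 4 5 => rw [← MonoidalCategory.comp_whiskerRight]
        rw [MonObj.mul_assoc_assoc]
        monoidal
      have hm : A.mon.mul = A.mon.mul ≫ ((ρ_ A.X).inv ≫ (A.X ◁ ρ) ≫ (α_ A.X A.X A.X).inv ≫
          ((A.mon.mul ≫ ϑ) ▷ A.X) ≫ (λ_ A.X).hom) := by rw [hS2, Category.comp_id]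
      symm
      calc (λ_ A.X).inv ≫ (ρ ▷ A.X) ≫ (α_ A.X A.X A.X).hom ≫ (A.X ◁ A.mon.mul)
          = (λ_ A.X).inv ≫ (ρ ▷ A.X) ≫ (α_ A.X A.X A.X).hom ≫
              (A.X ◁ (A.mon.mul ≫ ((ρ_ A.X).inv ≫ (A.X ◁ ρ) ≫ (α_ A.X A.X A.X).inv ≫
                ((A.mon.mul ≫ ϑ) ▷ A.X) ≫ (λ_ A.X).hom))) := by rw [← hm]
        _ = (λ_ A.X).inv ≫ (ρ ▷ A.X) ≫ (α_ A.X A.X A.X).hom ≫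
              (A.X ◁ ((A.X ◁ ((ρ_ A.X).inv ≫ (A.X ◁ ρ) ≫ (α_ A.X A.X A.X).inv ≫
                (A.mon.mul ▷ A.X))) ≫ (α_ A.X A.X A.X).inv ≫
                ((A.mon.mul ≫ ϑ) ▷ A.X) ≫ (λ_ A.X).hom)) := by rw [hB]
        _ = ((ρ_ A.X).inv ≫ (A.X ◁ ρ) ≫ (α_ A.X A.X A.X).inv ≫ (A.mon.mul ▷ A.X)) ≫
              (((λ_ A.X).inv ≫ (ρ ▷ A.X) ≫ (α_ A.X A.X A.X).hom ≫ (A.X ◁ (A.mon.mul ≫ ϑ)) ≫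
                (ρ_ A.X).hom) ▷ A.X) := pull_aux A.X ρ (A.mon.mul ≫ ϑ) _
        _ = (ρ_ A.X).inv ≫ (A.X ◁ ρ) ≫ (α_ A.X A.X A.X).inv ≫ (A.mon.mul ▷ A.X) := by
            rw [hS1]; simp
    · -- counit condition, left
      calc ρ ≫ (ϑ ▷ A.X) ≫ (λ_ A.X).hom
          = ρ ≫ (λ_ (A.X ⊗ A.X)).inv ≫ (α_ (𝟙_ C) A.X A.X).inv ≫ ((λ_ A.X).hom ▷ A.X) ≫
              (ϑ ▷ A.X) ≫ (λ_ A.X).hom := by monoidal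
        _ = ρ ≫ (λ_ (A.X ⊗ A.X)).inv ≫ (α_ (𝟙_ C) A.X A.X).inv ≫
              (((A.mon.one ▷ A.X) ≫ A.mon.mul) ▷ A.X) ≫ (ϑ ▷ A.X) ≫ (λ_ A.X).hom := by rw [MonObj.one_mul A.X]
        _ = A.mon.one := by
            simp only [MonoidalCategory.comp_whiskerRight, Category.assoc]
            slice_lhs 3 4 => rw [← associator_inv_naturality_left]
            slice_lhs 1 2 => rw [leftUnitor_inv_naturality]
            slice_lhs 2 3 => rw [whisker_exchange]
            trans A.mon.one ≫ ((ρ_ A.X).inv ≫ (A.X ◁ ρ) ≫ (α_ A.X A.X A.X).inv ≫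
              ((A.mon.mul ≫ ϑ) ▷ A.X) ≫ (λ_ A.X).hom)
            · monoidal
            · rw [hS2, Category.comp_id]
    · -- counit condition, right
      calc ρ ≫ (A.X ◁ ϑ) ≫ (ρ_ A.X).hom
          = ρ ≫ (ρ_ (A.X ⊗ A.X)).inv ≫ (α_ A.X A.X (𝟙_ C)).hom ≫ (A.X ◁ (ρ_ A.X).hom) ≫
              (A.X ◁ ϑ) ≫ (ρ_ A.X).hom := by monoidal
        _ = ρ ≫ (ρ_ (A.X ⊗ A.X)).inv ≫ (α_ A.X A.X (𝟙_ C)).hom ≫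
              (A.X ◁ ((A.X ◁ A.mon.one) ≫ A.mon.mul)) ≫ (A.X ◁ ϑ) ≫ (ρ_ A.X).hom := by rw [MonObj.mul_one A.X]
        _ = A.mon.one := by
            simp only [MonoidalCategory.whiskerLeft_comp, Category.assoc]
            slice_lhs 3 4 => rw [← associator_naturality_right]
            slice_lhs 1 2 => rw [rightUnitor_inv_naturality]
            slice_lhs 2 3 => rw [← whisker_exchange]
            trans A.mon.one ≫ ((λ_ A.X).inv ≫ (ρ ▷ A.X) ≫ (α_ A.X A.X A.X).hom ≫
              (A.X ◁ (A.mon.mul ≫ ϑ)) ≫ (ρ_ A.X).hom)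
            · monoidal
            · rw [hS1, Category.comp_id]
end

section
/- For a Frobenius algebra A in a monoidal category with Frobenius pair (ϑ, e), an element e' : 𝟙 → A ⊗ A defined by e' := (m_A ⊗ id_A)(id_A ⊗ α ⊗ id_A) e, for any α : 𝟙 → A satisfying m_A (m_A ⊗ id_A)(id_A ⊗ α ⊗ id_A) e = η_A, is a separability morphism: it satisfies the Casimir condition (m_A ⊗ id)(id ⊗ e') = (id ⊗ m_A)(e' ⊗ id) and m_A e' = η_A. -/
open CategoryTheory CategoryTheory.MonoidalCategory

universe v u

variable {C : Type u} [Category.{v} C] [MonoidalCategory C]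

/-- Rewriting `e'` as `e` postcomposed with right multiplication by `α` on the first factor. -/
lemma eprime_eq_whisker (A : Mon C) (α : 𝟙_ C ⟶ A.X) :
    (A.X ◁ ((λ_ A.X).inv ≫ (α ▷ A.X))) ≫ (α_ A.X A.X A.X).inv ≫ (A.mon.mul ▷ A.X)
      = (((ρ_ A.X).inv ≫ (A.X ◁ α) ≫ A.mon.mul) ▷ A.X) := by
  have h1 : (A.X ◁ (λ_ A.X).inv) ≫ (α_ A.X (𝟙_ C) A.X).inv = (ρ_ A.X).inv ▷ A.X := by
    monoidal_coherence
  simp only [MonoidalCategory.whiskerLeft_comp, comp_whiskerRight, Category.assoc]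
  rw [associator_inv_naturality_middle_assoc, reassoc_of% h1]

/-- Right multiplication by `α` commutes with left multiplication. -/
lemma rmul_comm (A : Mon C) (α : 𝟙_ C ⟶ A.X) :
    (A.X ◁ ((ρ_ A.X).inv ≫ (A.X ◁ α) ≫ A.mon.mul)) ≫ A.mon.mul
      = A.mon.mul ≫ ((ρ_ A.X).inv ≫ (A.X ◁ α) ≫ A.mon.mul) := by
  have h2 : (A.X ◁ (ρ_ A.X).inv) ≫ (α_ A.X A.X (𝟙_ C)).inv = (ρ_ (A.X ⊗ A.X)).inv := by
    monoidal_coherence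
  simp only [MonoidalCategory.whiskerLeft_comp, Category.assoc]
  rw [MonObj.mul_assoc_flip, associator_inv_naturality_right_assoc, whisker_exchange_assoc,
    reassoc_of% h2, ← rightUnitor_inv_naturality_assoc]

/-- For a Frobenius algebra `A` with Frobenius pair `(ϑ, e)` and any `α : 𝟙 ⟶ A` with
`m_A ∘ (m_A ⊗ id) ∘ (id ⊗ α ⊗ id) ∘ e = η_A`, the morphism
`e' := (m_A ⊗ id) ∘ (id ⊗ α ⊗ id) ∘ e` is a separability morphism: it satisfies the
Casimir condition and `m_A ∘ e' = η_A`. -/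
theorem frobenius_alpha_gives_separability_morphism (A : Mon C) (ϑ : A.X ⟶ 𝟙_ C)
    (e : 𝟙_ C ⟶ A.X ⊗ A.X) (h : Mon_.IsFrobeniusPair A ϑ e) (α : 𝟙_ C ⟶ A.X)
    (hα : e ≫ (A.X ◁ ((λ_ A.X).inv ≫ (α ▷ A.X))) ≫ (α_ A.X A.X A.X).inv ≫
        (A.mon.mul ▷ A.X) ≫ A.mon.mul = A.mon.one) :
    letI e' : 𝟙_ C ⟶ A.X ⊗ A.X :=
      e ≫ (A.X ◁ ((λ_ A.X).inv ≫ (α ▷ A.X))) ≫ (α_ A.X A.X A.X).inv ≫ (A.mon.mul ▷ A.X)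
    ((ρ_ A.X).inv ≫ (A.X ◁ e') ≫ (α_ A.X A.X A.X).inv ≫ (A.mon.mul ▷ A.X) =
        (λ_ A.X).inv ≫ (e' ▷ A.X) ≫ (α_ A.X A.X A.X).hom ≫ (A.X ◁ A.mon.mul)) ∧
      e' ≫ A.mon.mul = A.mon.one := by
  obtain ⟨hF, -, -⟩ := h
  set r : A.X ⟶ A.X := (ρ_ A.X).inv ≫ (A.X ◁ α) ≫ A.mon.mul with hr
  have hre : (A.X ◁ ((λ_ A.X).inv ≫ (α ▷ A.X))) ≫ (α_ A.X A.X A.X).inv ≫ (A.mon.mul ▷ A.X)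
      = (r ▷ A.X) := eprime_eq_whisker A α
  constructor
  · -- Casimir condition
    rw [hre]
    calc (ρ_ A.X).inv ≫ (A.X ◁ (e ≫ (r ▷ A.X))) ≫ (α_ A.X A.X A.X).inv ≫ (A.mon.mul ▷ A.X)
        = ((ρ_ A.X).inv ≫ (A.X ◁ e) ≫ (α_ A.X A.X A.X).inv ≫ (A.mon.mul ▷ A.X)) ≫ (r ▷ A.X) := by
          simp only [MonoidalCategory.whiskerLeft_comp, Category.assoc,
            associator_inv_naturality_middle_assoc, ← comp_whiskerRight_assoc,
            ← comp_whiskerRight]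
          rw [rmul_comm A α]
      _ = ((λ_ A.X).inv ≫ (e ▷ A.X) ≫ (α_ A.X A.X A.X).hom ≫ (A.X ◁ A.mon.mul)) ≫ (r ▷ A.X) := by
          rw [hF]
      _ = (λ_ A.X).inv ≫ ((e ≫ (r ▷ A.X)) ▷ A.X) ≫ (α_ A.X A.X A.X).hom ≫ (A.X ◁ A.mon.mul) := by
          simp only [comp_whiskerRight, Category.assoc, whisker_exchange,
            associator_naturality_left_assoc]
  · -- m_A ∘ e' = η_A
    simpa only [Category.assoc] using hα
end
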